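/- Quasi-submultiplicativity of geometric-time distance: for a finite irreducible Markov chain, d̄_G(2t) ≤ (1/2)·d̄_G(t)·(1 + d̄_G(t)). Consequently, if d̄_G(t) ≤ β < 1 then d̄_G(2^k t) ≤ ((1+β)/2)^k · d̄_G(t) for all k ∈ ℕ. -/

import Mathlib

open scoped BigOperators ENNReal

noncomputable section

/-- Total variation distance between two distributions on a finite set,
as half the `ℓ¹` distance. -/
def tv {S : Type*} [Fintype S] (μ ν : S → ℝ) : ℝ := (1 / 2) * ∑ y, |μ y - ν y|

/-- Law of the chain with transition matrix `P` started at `x`, evaluated at an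
independent random time with distribution `T` on ℕ. -/
def lawAt {S : Type*} [Fintype S] [DecidableEq S] (P : Matrix S S ℝ) (T : ℕ → ℝ)
    (x : S) : S → ℝ :=
  fun y => ∑' n, T n * (P ^ n) x y

/-- The geometric distribution on `{1,2,...}` with mean `t` (success probability `1/t`). -/
def geo (t : ℕ) : ℕ → ℝ :=
  fun n => if n = 0 then 0 else (1 / (t : ℝ)) * (1 - 1 / (t : ℝ)) ^ (n - 1)

/-- `d̄_G(t) = max_{x,y} ‖ℙ_x(X_{Z_t} ∈ ·) − ℙ_y(X_{Z_t} ∈ ·)‖` for an independent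
geometric time `Z_t` of mean `t`. -/
def dbarG {S : Type*} [Fintype S] [DecidableEq S] (P : Matrix S S ℝ) (t : ℕ) : ℝ :=
  ⨆ x, ⨆ y, tv (lawAt P (geo t) x) (lawAt P (geo t) y)

/-!
Let `G t` be the matrix whose rows are the laws of the chain at the geometric time `Z_t`.
Splitting off the last step gives `G t = t⁻¹ • P + (1 - t⁻¹) • (G t * P)`, and since `P` is an
`ℓ¹`-contraction, `X = b • (X * P)` with `|b| < 1` forces `X = 0`. Together these give
`G (2t) = ½ G t + ½ G t * G (2t)`: `Z_{2t}` has the law of `Z_t + ξ Z'_{2t}` for a fair coin `ξ`.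
So each row of `G (2t)` is a half–half mixture, and the coupling bound
`tv (μ Q) (ν Q) ≤ tv μ ν * max_{z,w} tv (Q z) (Q w)` with `Q = G (2t)` yields
`d̄(2t) ≤ ½ d̄(t) + ½ d̄(t) d̄(2t)`. As `d̄(t) ≤ 1`, this gives `d̄(2t) ≤ d̄(t)` and then
`d̄(2t) ≤ ½ d̄(t) (1 + d̄(t))`; iterating along `t, 2t, 4t, …` gives the geometric decay.
-/

open Finset Matrix

section Stochastic

variable {S : Type*} [Fintype S] [DecidableEq S] {P : Matrix S S ℝ}

lemma sum_abs_vecMul_le (hP : P ∈ rowStochastic ℝ S) (v : S → ℝ) :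
    ∑ y, |(v ᵥ* P) y| ≤ ∑ z, |v z| :=
  calc ∑ y, |(v ᵥ* P) y|
      ≤ ∑ y, ∑ z, |v z| * P z y := by
        refine sum_le_sum fun y _ => (abs_sum_le_sum_abs _ _).trans_eq ?_
        simp only [abs_mul, abs_of_nonneg (nonneg_of_mem_rowStochastic hP)]
    _ = ∑ z, |v z| := by
        rw [sum_comm]
        simp only [← mul_sum, sum_row_of_mem_rowStochastic hP, mul_one]

lemma eq_zero_of_eq_smul_vecMul (hP : P ∈ rowStochastic ℝ S) {b : ℝ} (hb : |b| < 1)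
    {v : S → ℝ} (hv : v = b • (v ᵥ* P)) : v = 0 := by
  have hle : ∑ z, |v z| ≤ |b| * ∑ z, |v z| :=
    calc ∑ z, |v z| = |b| * ∑ y, |(v ᵥ* P) y| := by
          conv_lhs => rw [hv]
          simp only [Pi.smul_apply, smul_eq_mul, abs_mul, mul_sum]
      _ ≤ |b| * ∑ z, |v z| := mul_le_mul_of_nonneg_left (sum_abs_vecMul_le hP v) (abs_nonneg b)
  have hzero : ∑ z, |v z| = 0 := by
    nlinarith [sum_nonneg fun z (_ : z ∈ univ) => abs_nonneg (v z)]
  ext z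
  simpa using (sum_eq_zero_iff_of_nonneg fun z _ => abs_nonneg (v z)).1 hzero z (mem_univ z)

lemma eq_zero_of_eq_smul_mul (hP : P ∈ rowStochastic ℝ S) {b : ℝ} (hb : |b| < 1)
    {X : Matrix S S ℝ} (hX : X = b • (X * P)) : X = 0 := by
  funext x
  exact eq_zero_of_eq_smul_vecMul hP hb (congrFun hX x)

end Stochastic

section Geometric

variable {t : ℕ}

lemma geo_succ (n : ℕ) : geo t (n + 1) = 1 / (t : ℝ) * (1 - 1 / (t : ℝ)) ^ n := by
  simp [geo]

lemma geo_succ_succ (n : ℕ) : geo t (n + 2) = (1 - 1 / (t : ℝ)) * geo t (n + 1) := by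
  rw [geo_succ, geo_succ, pow_succ]
  ring

variable (ht : 1 ≤ t)
include ht

lemma one_sub_one_div_mem_Ico : 1 - 1 / (t : ℝ) ∈ Set.Ico 0 1 := by
  have : (1 : ℝ) ≤ t := by exact_mod_cast ht
  constructor
  · linarith [(div_le_one (by linarith)).2 this]
  · linarith [one_div_pos.2 (by linarith : (0 : ℝ) < t)]

lemma geo_nonneg (n : ℕ) : 0 ≤ geo t n := by
  cases n with
  | zero => simp [geo]
  | succ n =>
    rw [geo_succ]
    exact mul_nonneg (by positivity) (pow_nonneg (one_sub_one_div_mem_Ico ht).1 n)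

lemma hasSum_geo : HasSum (geo t) 1 := by
  obtain ⟨h0, h1⟩ := one_sub_one_div_mem_Ico ht
  have ht0 : (t : ℝ) ≠ 0 := by positivity
  have h := (hasSum_geometric_of_lt_one h0 h1).mul_left (1 / (t : ℝ))
  rw [sub_sub_cancel, one_div, inv_inv, inv_mul_cancel₀ ht0] at h
  rw [← hasSum_nat_add_iff' 1]
  simpa [geo_succ, geo] using h

end Geometric

section Law

variable {S : Type*} [Fintype S] [DecidableEq S] {P : Matrix S S ℝ} {T : ℕ → ℝ}

lemma summable_lawAt_term (hP : P ∈ rowStochastic ℝ S) (hT : Summable T) (x y : S) :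
    Summable fun n => T n * (P ^ n) x y := by
  refine hT.abs.of_norm_bounded fun n => ?_
  have hPn := pow_mem hP n
  rw [Real.norm_eq_abs, abs_mul, abs_of_nonneg (nonneg_of_mem_rowStochastic hPn)]
  exact mul_le_of_le_one_right (abs_nonneg _) (le_one_of_mem_rowStochastic hPn)

lemma lawAt_nonneg (hP : P ∈ rowStochastic ℝ S) (hT : ∀ n, 0 ≤ T n) (x y : S) :
    0 ≤ lawAt P T x y :=
  tsum_nonneg fun n => mul_nonneg (hT n) (nonneg_of_mem_rowStochastic (pow_mem hP n))

lemma sum_lawAt (hP : P ∈ rowStochastic ℝ S) (hT : Summable T) (x : S) :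
    ∑ y, lawAt P T x y = ∑' n, T n := by
  simp only [lawAt]
  rw [← Summable.tsum_finsetSum fun y _ => summable_lawAt_term hP hT x y]
  simp only [← mul_sum, sum_row_of_mem_rowStochastic (pow_mem hP _), mul_one]

end Law

def geoKernel {S : Type*} [Fintype S] [DecidableEq S] (P : Matrix S S ℝ) (t : ℕ) :
    Matrix S S ℝ :=
  Matrix.of (lawAt P (geo t))

section GeoKernel

variable {S : Type*} [Fintype S] [DecidableEq S] {P : Matrix S S ℝ} {t : ℕ}
  (hP : P ∈ rowStochastic ℝ S) (ht : 1 ≤ t)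
include hP ht

lemma geoKernel_mem_rowStochastic : geoKernel P t ∈ rowStochastic ℝ S :=
  mem_rowStochastic_iff_sum.2
    ⟨lawAt_nonneg hP (geo_nonneg ht),
      fun x => (sum_lawAt hP (hasSum_geo ht).summable x).trans (hasSum_geo ht).tsum_eq⟩

lemma geoKernel_apply (x y : S) :
    geoKernel P t x y = ∑' n, geo t (n + 1) * (P ^ (n + 1)) x y := by
  rw [geoKernel, of_apply, lawAt,
    (summable_lawAt_term hP (hasSum_geo ht).summable x y).tsum_eq_zero_add]
  simp [geo]

lemma geoKernel_eq_smul_add_smul_mul :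
    geoKernel P t = (1 / (t : ℝ)) • P + (1 - 1 / (t : ℝ)) • (geoKernel P t * P) := by
  ext x y
  have hs : ∀ x y : S, Summable fun n => geo t (n + 1) * (P ^ (n + 1)) x y := fun x y =>
    (summable_nat_add_iff 1).2 (summable_lawAt_term hP (hasSum_geo ht).summable x y)
  rw [geoKernel_apply hP ht, (hs x y).tsum_eq_zero_add]
  simp only [Matrix.add_apply, Matrix.smul_apply, smul_eq_mul, mul_apply, geoKernel_apply hP ht]
  congr 1
  · simp [geo]
  · simp only [← tsum_mul_right, ← Summable.tsum_finsetSum fun z _ => (hs x z).mul_right (P z y),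
      ← tsum_mul_left, pow_succ _ (_ + 1), mul_apply, mul_sum, geo_succ_succ]
    exact tsum_congr fun n => sum_congr rfl fun z _ => by ring

lemma geoKernel_two_mul :
    geoKernel P (2 * t) = (1 / 2 : ℝ) • geoKernel P t
      + (1 / 2 : ℝ) • (geoKernel P t * geoKernel P (2 * t)) := by
  have ht₂ : 1 ≤ 2 * t := by omega
  set G₁ := geoKernel P t
  set G₂ := geoKernel P (2 * t)
  set q : ℝ := 1 / ((2 * t : ℕ) : ℝ)
  have hq : 1 / (t : ℝ) = 2 * q := by
    simp only [q]; push_cast; field_simp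
  have h₁ : (1 - q - q) • (G₁ * P) = G₁ - (2 * q) • P := by
    have h := geoKernel_eq_smul_add_smul_mul hP ht
    rw [hq] at h
    linear_combination (norm := module) -h
  have h₂ : (1 - q) • (G₂ * P) = G₂ - q • P :=
    eq_sub_of_add_eq' (geoKernel_eq_smul_add_smul_mul hP ht₂).symm
  have h₃ : (1 - q) • (G₁ * (G₂ * P)) = G₁ * G₂ - q • (G₁ * P) := by
    rw [← mul_smul_comm, h₂, mul_sub, mul_smul_comm]
  have hb : |1 - q| < 1 := by
    have h := one_sub_one_div_mem_Ico ht₂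
    exact abs_lt.2 ⟨by linarith [h.1], h.2⟩
  have hX := eq_zero_of_eq_smul_mul hP hb
    (X := (1 / 2 : ℝ) • G₁ + (1 / 2 : ℝ) • (G₁ * G₂) - G₂) (by
      simp only [sub_mul, add_mul, smul_mul_assoc, mul_assoc, smul_sub, smul_add]
      linear_combination (norm := module) h₂ - (1 / 2 : ℝ) • h₁ - (1 / 2 : ℝ) • h₃)
  exact (sub_eq_zero.1 hX).symm

end GeoKernel

section TotalVariation

variable {S : Type*} [Fintype S]

lemma tv_nonneg (μ ν : S → ℝ) : 0 ≤ tv μ ν :=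
  mul_nonneg (by norm_num) (sum_nonneg fun y _ => abs_nonneg _)

lemma tv_add_le (μ ν μ' ν' : S → ℝ) : tv (μ + μ') (ν + ν') ≤ tv μ ν + tv μ' ν' := by
  simp only [tv, ← mul_add, ← sum_add_distrib, Pi.add_apply]
  gcongr with y
  exact (abs_add_le _ _).trans_eq' (by ring_nf)

lemma tv_smul (c : ℝ) (μ ν : S → ℝ) : tv (c • μ) (c • ν) = |c| * tv μ ν := by
  simp only [tv, Pi.smul_apply, smul_eq_mul, ← mul_sub, abs_mul, ← mul_sum]
  ring

lemma tv_le_one {μ ν : S → ℝ} (hμ₀ : ∀ y, 0 ≤ μ y) (hμ₁ : ∑ y, μ y = 1)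
    (hν₀ : ∀ y, 0 ≤ ν y) (hν₁ : ∑ y, ν y = 1) : tv μ ν ≤ 1 := by
  have h : ∑ y, |μ y - ν y| ≤ ∑ y, (μ y + ν y) :=
    sum_le_sum fun y _ => abs_sub_le_iff.2 ⟨by linarith [hν₀ y], by linarith [hμ₀ y]⟩
  rw [sum_add_distrib, hμ₁, hν₁] at h
  rw [tv]
  linarith

lemma sum_mul_le_of_sum_eq_zero {d g : S → ℝ} {D : ℝ} (hd : ∑ z, d z = 0)
    (hg : ∀ z w, g z - g w ≤ 2 * D) : ∑ z, d z * g z ≤ D * ∑ z, |d z| := by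
  rcases isEmpty_or_nonempty S with hS | hS
  · simp
  obtain ⟨zmax, hmax⟩ := Finite.exists_max g
  obtain ⟨zmin, hmin⟩ := Finite.exists_min g
  obtain ⟨c, hc⟩ : ∃ c, ∀ z, |g z - c| ≤ D := ⟨(g zmax + g zmin) / 2, fun z =>
    abs_le.2 ⟨by linarith [hg zmax zmin, hmin z], by linarith [hg zmax zmin, hmax z]⟩⟩
  calc ∑ z, d z * g z = ∑ z, d z * (g z - c) := by
        simp only [mul_sub, sum_sub_distrib, ← sum_mul, hd, zero_mul, sub_zero]
    _ ≤ ∑ z, |d z| * D := sum_le_sum fun z _ => (le_abs_self _).trans <| by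
        rw [abs_mul]; exact mul_le_mul_of_nonneg_left (hc z) (abs_nonneg _)
    _ = D * ∑ z, |d z| := by rw [← sum_mul, mul_comm]

lemma tv_vecMul_le {μ ν : S → ℝ} (hμν : ∑ z, μ z = ∑ z, ν z) {Q : Matrix S S ℝ} {D : ℝ}
    (hQ : ∀ z w, tv (Q z) (Q w) ≤ D) : tv (μ ᵥ* Q) (ν ᵥ* Q) ≤ tv μ ν * D := by
  set d := μ - ν
  set s : S → ℝ := fun y => SignType.sign ((d ᵥ* Q) y)
  have hd : ∑ z, d z = 0 := by simp [d, sum_sub_distrib, hμν]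
  have hs : ∀ y, |s y| ≤ 1 := fun y => by
    simp only [s]; cases SignType.sign ((d ᵥ* Q) y) <;> simp
  have hosc : ∀ z w, (Q *ᵥ s) z - (Q *ᵥ s) w ≤ 2 * D := fun z w =>
    calc (Q *ᵥ s) z - (Q *ᵥ s) w = ∑ y, (Q z y - Q w y) * s y := by
          simp only [mulVec, dotProduct, sub_mul, sum_sub_distrib]
      _ ≤ ∑ y, |Q z y - Q w y| := sum_le_sum fun y _ => (le_abs_self _).trans <| by
          rw [abs_mul]; exact mul_le_of_le_one_right (abs_nonneg _) (hs y)
      _ ≤ 2 * D := by have := hQ z w; rw [tv] at this; linarith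
  calc tv (μ ᵥ* Q) (ν ᵥ* Q) = 1 / 2 * ∑ z, d z * (Q *ᵥ s) z := by
        have habs : ∀ y, |(μ ᵥ* Q) y - (ν ᵥ* Q) y| = (d ᵥ* Q) y * s y := fun y => by
          simp only [s, d, sub_vecMul, Pi.sub_apply, self_mul_sign]
        rw [tv, sum_congr rfl fun y _ => habs y]
        exact congrArg _ (dotProduct_mulVec d Q s).symm
    _ ≤ 1 / 2 * (D * ∑ z, |d z|) := by gcongr; exact sum_mul_le_of_sum_eq_zero hd hosc
    _ = tv μ ν * D := by rw [tv]; simp only [d, Pi.sub_apply]; ring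

end TotalVariation

lemma le_geometric_of_le_half_mul_one_add {d : ℕ → ℝ} {β : ℝ} (hd₀ : ∀ k, 0 ≤ d k)
    (hanti : ∀ k, d (k + 1) ≤ d k) (hstep : ∀ k, d (k + 1) ≤ 1 / 2 * d k * (1 + d k))
    (hβ : d 0 ≤ β) (k : ℕ) : d k ≤ ((1 + β) / 2) ^ k * d 0 := by
  have hdβ : ∀ k, d k ≤ β := fun k =>
    (antitone_nat_of_succ_le hanti (Nat.zero_le k)).trans hβ
  induction k with
  | zero => simp
  | succ k ih =>
    calc d (k + 1) ≤ (1 + β) / 2 * d k := by nlinarith [hstep k, hdβ k, hd₀ k]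
      _ ≤ (1 + β) / 2 * (((1 + β) / 2) ^ k * d 0) := by
          gcongr; linarith [hd₀ 0]
      _ = ((1 + β) / 2) ^ (k + 1) * d 0 := by ring

section DbarG

variable {S : Type*} [Fintype S] [DecidableEq S] {P : Matrix S S ℝ}

lemma tv_le_dbarG (t : ℕ) (x y : S) :
    tv (geoKernel P t x) (geoKernel P t y) ≤ dbarG P t :=
  (le_ciSup (Set.finite_range _).bddAbove y).trans
    (le_ciSup (f := fun x => ⨆ y, tv (lawAt P (geo t) x) (lawAt P (geo t) y))
      (Set.finite_range _).bddAbove x)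

lemma dbarG_nonneg (t : ℕ) : 0 ≤ dbarG P t :=
  Real.iSup_nonneg fun _ => Real.iSup_nonneg fun _ => tv_nonneg _ _

lemma dbarG_le {t : ℕ} {c : ℝ} (hc : 0 ≤ c)
    (h : ∀ x y, tv (geoKernel P t x) (geoKernel P t y) ≤ c) : dbarG P t ≤ c :=
  Real.iSup_le (fun x => Real.iSup_le (h x) hc) hc

variable (hP : P ∈ rowStochastic ℝ S) {t : ℕ} (ht : 1 ≤ t)
include hP ht

lemma dbarG_le_one : dbarG P t ≤ 1 := by
  have hG := geoKernel_mem_rowStochastic hP ht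
  exact dbarG_le zero_le_one fun x y =>
    tv_le_one (fun _ => nonneg_of_mem_rowStochastic hG) (sum_row_of_mem_rowStochastic hG x)
      (fun _ => nonneg_of_mem_rowStochastic hG) (sum_row_of_mem_rowStochastic hG y)

lemma dbarG_two_mul_le_add_mul :
    dbarG P (2 * t) ≤ 1 / 2 * dbarG P t + 1 / 2 * (dbarG P t * dbarG P (2 * t)) := by
  have hG := geoKernel_mem_rowStochastic hP ht
  refine dbarG_le (by nlinarith [dbarG_nonneg (P := P) t, dbarG_nonneg (P := P) (2 * t)])
    fun x y => ?_
  rw [geoKernel_two_mul hP ht]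
  calc _ ≤ |(1 / 2 : ℝ)| * tv (geoKernel P t x) (geoKernel P t y)
        + |(1 / 2 : ℝ)| * tv (geoKernel P t x ᵥ* geoKernel P (2 * t))
            (geoKernel P t y ᵥ* geoKernel P (2 * t)) := by
        rw [← tv_smul, ← tv_smul]
        exact tv_add_le _ _ _ _
    _ ≤ 1 / 2 * dbarG P t + 1 / 2 * (dbarG P t * dbarG P (2 * t)) := by
        rw [abs_of_pos one_half_pos]
        gcongr
        · exact tv_le_dbarG t x y
        · refine (tv_vecMul_le ?_ fun z w => tv_le_dbarG (2 * t) z w).trans ?_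
          · rw [sum_row_of_mem_rowStochastic hG, sum_row_of_mem_rowStochastic hG]
          · exact mul_le_mul_of_nonneg_right (tv_le_dbarG t x y) (dbarG_nonneg _)

lemma dbarG_two_mul_le_self : dbarG P (2 * t) ≤ dbarG P t := by
  nlinarith [dbarG_two_mul_le_add_mul hP ht, dbarG_le_one hP ht, dbarG_nonneg (P := P) t,
    dbarG_nonneg (P := P) (2 * t)]

lemma dbarG_two_mul_le : dbarG P (2 * t) ≤ 1 / 2 * dbarG P t * (1 + dbarG P t) := by
  nlinarith [dbarG_two_mul_le_add_mul hP ht, dbarG_two_mul_le_self hP ht,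
    dbarG_nonneg (P := P) t]

end DbarG

theorem claim_submult_general {S : Type*} [Fintype S] [DecidableEq S]
    (P : Matrix S S ℝ)
    (hP0 : ∀ x y, 0 ≤ P x y) (hP1 : ∀ x, ∑ y, P x y = 1)
    (t : ℕ) (ht : 1 ≤ t) :
    dbarG P (2 * t) ≤ (1 / 2) * dbarG P t * (1 + dbarG P t) ∧
    ∀ β : ℝ, β < 1 → dbarG P t ≤ β →
      ∀ k : ℕ, dbarG P (2 ^ k * t) ≤ ((1 + β) / 2) ^ k * dbarG P t := by
  have hP : P ∈ rowStochastic ℝ S := mem_rowStochastic_iff_sum.2 ⟨hP0, hP1⟩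
  have ht' : ∀ k, 1 ≤ 2 ^ k * t := fun k => Nat.mul_le_mul Nat.one_le_two_pow ht
  have hdouble : ∀ k, 2 ^ (k + 1) * t = 2 * (2 ^ k * t) := fun k => by ring
  refine ⟨dbarG_two_mul_le hP ht, fun β _ hβ k => ?_⟩
  simpa using le_geometric_of_le_half_mul_one_add (d := fun k => dbarG P (2 ^ k * t))
    (fun k => dbarG_nonneg _)
    (fun k => by simpa only [hdouble] using dbarG_two_mul_le_self hP (ht' k))
    (fun k => by simpa only [hdouble] using dbarG_two_mul_le hP (ht' k))
    (by simpa using hβ) k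

/-- quasi-submultiplicativity: for a finite irreducible chain,
`d̄_G(2t) ≤ (1/2)·d̄_G(t)·(1 + d̄_G(t))`; consequently, if `d̄_G(t) ≤ β < 1`, then
`d̄_G(2^k t) ≤ ((1+β)/2)^k · d̄_G(t)` for all `k`. -/
theorem claim_submult {S : Type*} [Fintype S] [DecidableEq S] [Nonempty S]
    (P : Matrix S S ℝ)
    (hP0 : ∀ x y, 0 ≤ P x y) (hP1 : ∀ x, ∑ y, P x y = 1)
    (hirr : ∀ x y, ∃ n, 0 < (P ^ n) x y)
    (t : ℕ) (ht : 1 ≤ t) :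
    dbarG P (2 * t) ≤ (1 / 2) * dbarG P t * (1 + dbarG P t) ∧
    ∀ β : ℝ, β < 1 → dbarG P t ≤ β →
      ∀ k : ℕ, dbarG P (2 ^ k * t) ≤ ((1 + β) / 2) ^ k * dbarG P t :=
  claim_submult_general P hP0 hP1 t ht
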